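/- Let n ≥ 1 be an integer, β > 1, ζ > 1 and q ≥ 0 real numbers with r := (1+q)·β^{1−ζ} < 1, and let α > 0, m̄ > 0, h > 0, C > 0. For 2 ≤ k ≤ n let m_k > 0 satisfy m_k^α ≥ m̄^α·β^{ζ(n−k)} and let δ_k satisfy 0 ≤ δ_k ≤ β^{n−k}·h. Let (e_k)_{k=1}^n be nonnegative reals with e_1 = 0 and e_{k+1} ≤ (1+q)·e_k + C·δ_{k+1}/m_{k+1}^α for all 1 ≤ k ≤ n−1. Then e_n ≤ C·h/(m̄^α·(1 − r)). In particular, for any γ ∈ (0,1], if m̄^α > C/(γ·(1 − r)) then e_n ≤ γ·h. -/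

import Mathlib

/-- **Final accuracy estimate of Theorem 3.3 of the paper** for the abstract
error recursion of the eigenvalue cascadic multigrid method.  Under the
conditions `m_k^α ≥ m̄^α β^(ζ(n-k))`, `0 ≤ δ_k ≤ β^(n-k) h`,
`r := (1+q) β^(1-ζ) < 1`, `e 1 = 0` and
`e (k+1) ≤ (1+q) e k + C δ_(k+1) / m_(k+1)^α`, one has
`e n ≤ C h / (m̄^α (1-r))`; in particular, for `γ ∈ (0,1]`, if
`m̄^α > C / (γ (1-r))` then `e n ≤ γ h`. -/
theorem cascadic_final_error_estimate
    (n : ℕ) (hn : 1 ≤ n)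
    (β ζ q α mbar h C : ℝ)
    (hβ : 1 < β) (hζ : 1 < ζ) (hq : 0 ≤ q)
    (hr : (1 + q) * β ^ (1 - ζ) < 1)
    (hα : 0 < α) (hmbar : 0 < mbar) (hh : 0 < h) (hC : 0 < C)
    (m δ e : ℕ → ℝ)
    (hm_pos : ∀ k, 2 ≤ k → k ≤ n → 0 < m k)
    (hm_low : ∀ k, 2 ≤ k → k ≤ n →
      mbar ^ α * β ^ (ζ * ((n - k : ℕ) : ℝ)) ≤ m k ^ α)
    (hδ_nonneg : ∀ k, 2 ≤ k → k ≤ n → 0 ≤ δ k)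
    (hδ_up : ∀ k, 2 ≤ k → k ≤ n → δ k ≤ β ^ (n - k) * h)
    (he_nonneg : ∀ k, 1 ≤ k → k ≤ n → 0 ≤ e k)
    (he1 : e 1 = 0)
    (he_rec : ∀ k, 1 ≤ k → k + 1 ≤ n →
      e (k + 1) ≤ (1 + q) * e k + C * δ (k + 1) / m (k + 1) ^ α) :
    e n ≤ C * h / (mbar ^ α * (1 - (1 + q) * β ^ (1 - ζ))) ∧
      ∀ γ : ℝ, 0 < γ → γ ≤ 1 →
        C / (γ * (1 - (1 + q) * β ^ (1 - ζ))) < mbar ^ α →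
        e n ≤ γ * h := by
  have hβ0 : (0:ℝ) < β := lt_trans one_pos hβ
  set r : ℝ := (1 + q) * β ^ (1 - ζ) with hrdef
  have hr0 : 0 ≤ r := mul_nonneg (by linarith) (Real.rpow_pos_of_pos hβ0 _).le
  have hmbarα : 0 < mbar ^ α := Real.rpow_pos_of_pos hmbar α
  have h1r : 0 < 1 - r := by linarith
  set A : ℝ := C * h / mbar ^ α with hA
  have hApos : 0 < A := by positivity
  have key : ∀ k, 1 ≤ k → k ≤ n →
      e k ≤ A * β ^ ((1 - ζ) * ((n - k : ℕ) : ℝ)) * ∑ i ∈ Finset.range (k - 1), r ^ i := by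
    intro k
    induction k with
    | zero => intro hk; omega
    | succ k ih =>
      intro _ hkn
      rcases Nat.eq_zero_or_pos k with hk0 | hk1
      · subst hk0
        simp [he1]
      · have hkn' : k ≤ n := by omega
        have hkk : k + 1 ≤ n := hkn
        have h2 : 2 ≤ k + 1 := by omega
        set j : ℕ := n - (k + 1) with hj
        have hjk : n - k = j + 1 := by omega
        -- bound the smoothing term
        have hmp : 0 < m (k+1) ^ α := Real.rpow_pos_of_pos (hm_pos _ h2 hkk) α
        have hml := hm_low (k+1) h2 hkk
        have hdu := hδ_up (k+1) h2 hkk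
        have hdn := hδ_nonneg (k+1) h2 hkk
        have hden : 0 < mbar ^ α * β ^ (ζ * (j : ℝ)) :=
          mul_pos hmbarα (Real.rpow_pos_of_pos hβ0 _)
        have hstep : C * δ (k+1) / m (k+1) ^ α
            ≤ C * (β ^ j * h) / (mbar ^ α * β ^ (ζ * (j : ℝ))) := by
          apply div_le_div₀ (by positivity)
            (by nlinarith [pow_pos hβ0 j]) hden hml
        have hEq : C * (β ^ j * h) / (mbar ^ α * β ^ (ζ * (j : ℝ)))
            = A * β ^ ((1 - ζ) * (j : ℝ)) := by
          have h1 : (β : ℝ) ^ j = β ^ ((j : ℝ)) := (Real.rpow_natCast β j).symm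
          have h2' : β ^ ((1 - ζ) * (j : ℝ)) = β ^ ((j:ℝ)) / β ^ (ζ * (j : ℝ)) := by
            rw [← Real.rpow_sub hβ0]; ring_nf
          rw [hA, h1, h2']
          have hb1 : β ^ ((j:ℝ)) ≠ 0 := ne_of_gt (Real.rpow_pos_of_pos hβ0 _)
          have hb2 : β ^ (ζ * (j : ℝ)) ≠ 0 := ne_of_gt (Real.rpow_pos_of_pos hβ0 _)
          field_simp
        have hrec := he_rec k hk1 hkk
        have hih := ih hk1 hkn'
        rw [hjk] at hih
        have hsplit : β ^ ((1 - ζ) * ((j + 1 : ℕ) : ℝ))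
            = β ^ ((1 - ζ) * (j : ℝ)) * β ^ (1 - ζ) := by
          push_cast
          rw [← Real.rpow_add hβ0]; ring_nf
        have hsum : ∑ i ∈ Finset.range ((k+1) - 1), r ^ i
            = r * ∑ i ∈ Finset.range (k - 1), r ^ i + 1 := by
          have : (k + 1) - 1 = (k - 1) + 1 := by omega
          rw [this, geom_sum_succ]
        have hSnn : 0 ≤ ∑ i ∈ Finset.range (k - 1), r ^ i :=
          Finset.sum_nonneg fun i _ => pow_nonneg hr0 i
        calc e (k+1) ≤ (1 + q) * e k + C * δ (k+1) / m (k+1) ^ α := hrec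
          _ ≤ (1 + q) * (A * β ^ ((1 - ζ) * ((j + 1 : ℕ) : ℝ))
                * ∑ i ∈ Finset.range (k - 1), r ^ i)
              + A * β ^ ((1 - ζ) * (j : ℝ)) := by
            have := hstep.trans_eq hEq
            have h1q : (0:ℝ) ≤ 1 + q := by linarith
            gcongr
          _ = A * β ^ ((1 - ζ) * (j : ℝ))
              * ∑ i ∈ Finset.range ((k+1) - 1), r ^ i := by
            rw [hsum, hsplit, hrdef]; ring
  have hSn : ∑ i ∈ Finset.range (n - 1), r ^ i ≤ 1 / (1 - r) := by
    rw [le_div_iff₀ h1r]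
    have := geom_sum_mul r (n - 1)
    nlinarith [pow_nonneg hr0 (n - 1)]
  have hen : e n ≤ A * ∑ i ∈ Finset.range (n - 1), r ^ i := by
    have := key n hn le_rfl
    simpa using this
  have hfin : e n ≤ C * h / (mbar ^ α * (1 - r)) := by
    have : A * ∑ i ∈ Finset.range (n - 1), r ^ i ≤ A * (1 / (1 - r)) := by
      gcongr
    have hEq2 : A * (1 / (1 - r)) = C * h / (mbar ^ α * (1 - r)) := by
      rw [hA]; field_simp
    linarith [hen.trans (this.trans_eq hEq2)]
  refine ⟨hfin, fun γ hγ0 _ hγm => ?_⟩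
  have hCle : C < mbar ^ α * (γ * (1 - r)) := by
    rw [div_lt_iff₀ (by positivity)] at hγm
    linarith
  have : C * h / (mbar ^ α * (1 - r)) ≤ γ * h := by
    rw [div_le_iff₀ (by positivity)]
    nlinarith
  linarith
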